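/- In the complexified Clifford-Witt algebra, let D⁻_{x,t} = Σⱼ eⱼ∂/∂xⱼ + 𝔣∂ₜ - i𝔣⁺ and let M^a denote right multiplication by a smooth function a(x,t). Then for scalar-valued smooth u(x,t), (D⁻_{x,t} + M^a)(D⁻_{x,t} - M^a)u = (-i∂ₜ - Δ)u - u·(D_x a + 𝔣·∂ₜa + a²). Hence this factorizes the non-stationary Schrödinger operator -i∂ₜ - Δ - V if and only if D_x a + 𝔣(∂ₜa) + a² = V. -/

import Mathlib

/-!
Expanding `(D⁻ + M^a)(D⁻ - M^a)u` by the Leibniz rule, the second-order part is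
`Σᵢⱼ ∂ᵢ∂ⱼu eᵢeⱼ + Σᵢ ∂ᵢ∂ₜu (eᵢ𝔣 + 𝔣eᵢ) + ∂ₜ²u 𝔣²`; by the symmetry of the Hessian and the
anticommutation relations only `-Δu` survives. Of the terms of order at most one in `u` without `a`,
`eᵢ𝔣⁺ + 𝔣⁺eᵢ = 0` and `(𝔣⁺)² = 0` leave `-i∂ₜu (𝔣𝔣⁺ + 𝔣⁺𝔣) = -i∂ₜu`. Because `M^a` multiplies on
the right, the terms `∂u · a` produced by the two factors cancel, and what remains of `a` is
`-u (D_x a + 𝔣 ∂ₜa + a²)`.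
-/

/-- `f` and `f'` stand for `𝔣` and `𝔣⁺`. -/
structure CliffordWittRelations {A : Type*} [Ring A] {n : ℕ} (e : Fin n → A) (f f' : A) :
    Prop where
  clifford : ∀ i j, e i * e j + e j * e i = if i = j then -2 else 0
  witt : f * f' + f' * f = 1
  mul_self : f * f = 0
  mul_self' : f' * f' = 0
  anticomm : ∀ j, f * e j + e j * f = 0
  anticomm' : ∀ j, f' * e j + e j * f' = 0

section Algebra

variable {R A : Type*} [CommRing R] [Ring A] [Algebra R A] {n : ℕ} {e : Fin n → A}

theorem sum_mul_sum_smul_of_clifford [Invertible (2 : R)]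
    (he : ∀ i j, e i * e j + e j * e i = if i = j then -2 else 0)
    (d : Fin n → Fin n → R) (hd : ∀ i j, d i j = d j i) :
    ∑ i, e i * ∑ j, d i j • e j = (-∑ j, d j j) • (1 : A) := by
  have hsymm : ∑ i, e i * ∑ j, d i j • e j = ∑ i, ∑ j, d i j • (e j * e i) := by
    simp only [Finset.mul_sum, mul_smul_comm]
    rw [Finset.sum_comm]
    simp only [hd]
  have hneg_two : (-2 : A) = (-2 : R) • (1 : A) := by
    rw [← Algebra.algebraMap_eq_smul_one, map_neg, map_ofNat]
  have htwice : (2 : R) • ∑ i, e i * ∑ j, d i j • e j = (2 : R) • (-∑ j, d j j) • (1 : A) := by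
    calc (2 : R) • ∑ i, e i * ∑ j, d i j • e j
        = ∑ i, ∑ j, d i j • (e i * e j + e j * e i) := by
          rw [two_smul]
          nth_rewrite 2 [hsymm]
          simp only [Finset.mul_sum, mul_smul_comm, smul_add, Finset.sum_add_distrib]
      _ = (2 : R) • (-∑ j, d j j) • (1 : A) := by
          simp only [he, smul_ite, smul_zero, Finset.sum_ite_eq, Finset.mem_univ, if_true,
            hneg_two, smul_smul, ← Finset.sum_smul]
          congr 1
          rw [← Finset.sum_mul]
          ring
  simpa [smul_smul] using congrArg ((⅟2 : R) • ·) htwice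

theorem anticomm_sum_smul {b : A} (hb : ∀ j, b * e j + e j * b = 0) (c : Fin n → R) :
    b * (∑ j, c j • e j) + (∑ j, c j • e j) * b = 0 := by
  simp only [Finset.mul_sum, Finset.sum_mul, mul_smul_comm, smul_mul_assoc,
    ← Finset.sum_add_distrib, ← smul_add, hb, smul_zero, Finset.sum_const_zero]

end Algebra

namespace CliffordWittRelations

variable {A : Type*} [Ring A] [Algebra ℂ A] {n : ℕ} {e : Fin n → A} {f f' : A}

theorem factorization_jet_identity (h : CliffordWittRelations e f f') (u uₜ uₜₜ : ℂ)
    (uₓ uₓₜ : Fin n → ℂ) (uₓₓ : Fin n → Fin n → ℂ) (huₓₓ : ∀ i j, uₓₓ i j = uₓₓ j i)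
    (a aₜ : A) (aₓ : Fin n → A) :
    (∑ i, e i * ((∑ j, uₓₓ i j • e j) + uₓₜ i • f - (Complex.I * uₓ i) • f'
        - (u • aₓ i + uₓ i • a)))
      + f * ((∑ j, uₓₜ j • e j) + uₜₜ • f - (Complex.I * uₜ) • f' - (u • aₜ + uₜ • a))
      - Complex.I • (f' * ((∑ j, uₓ j • e j) + uₜ • f - (Complex.I * u) • f' - u • a))
      + ((∑ j, uₓ j • e j) + uₜ • f - (Complex.I * u) • f' - u • a) * a
    = (-Complex.I * uₜ - ∑ j, uₓₓ j j) • (1 : A)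
      - u • ((∑ j, e j * aₓ j) + f * aₜ + a * a) := by
  have hΔ := sum_mul_sum_smul_of_clifford h.clifford uₓₓ huₓₓ
  have hxt := anticomm_sum_smul h.anticomm uₓₜ
  have hx := anticomm_sum_smul h.anticomm' fun j => Complex.I * uₓ j
  have ht : (Complex.I * uₜ) • (f * f' + f' * f) = (Complex.I * uₜ) • (1 : A) := by rw [h.witt]
  simp only [mul_add, add_mul, mul_sub, sub_mul, Finset.mul_sum, Finset.sum_mul,
    mul_smul_comm, smul_mul_assoc, smul_add, smul_sub, smul_smul, Finset.smul_sum,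
    Finset.sum_add_distrib, Finset.sum_sub_distrib, h.mul_self, h.mul_self', smul_zero,
    sub_zero, add_zero] at hΔ hxt hx ht ⊢
  linear_combination (norm := module) hΔ + hxt - hx - ht

end CliffordWittRelations

theorem DifferentiableAt.hasFDerivAt_fderiv_apply {𝕜 E F : Type*} [NontriviallyNormedField 𝕜]
    [NormedAddCommGroup E] [NormedSpace 𝕜 E] [NormedAddCommGroup F] [NormedSpace 𝕜 F]
    {u : E → F} {p : E} (h : DifferentiableAt 𝕜 (fderiv 𝕜 u) p) (w : E) :
    HasFDerivAt (fun q => fderiv 𝕜 u q w) ((fderiv 𝕜 (fderiv 𝕜 u) p).flip w) p := by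
  simpa using h.hasFDerivAt.clm_apply (hasFDerivAt_const w p)

section ParabolicDirac

variable {n : ℕ} {A : Type*}

/-- `D⁻_{x,t} u` for a scalar function `u`, with the values of `u` and its derivatives written to
the left of the generators. -/
noncomputable def scalarParabolicDirac [Ring A] [Module ℂ A] (e : Fin n → A) (f f' : A)
    (u : (Fin n → ℝ) × ℝ → ℂ) (q : (Fin n → ℝ) × ℝ) : A :=
  (∑ j, fderiv ℝ u q (Pi.single j 1, 0) • e j) + fderiv ℝ u q (0, 1) • f
    - (Complex.I * u q) • f'

/-- `D⁻_{x,t} g` for an `A`-valued function `g`. -/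
noncomputable def parabolicDirac [NormedRing A] [NormedSpace ℝ A] [SMul ℂ A] (e : Fin n → A)
    (f f' : A) (g : (Fin n → ℝ) × ℝ → A) (q : (Fin n → ℝ) × ℝ) : A :=
  (∑ i, e i * fderiv ℝ g q (Pi.single i 1, 0)) + f * fderiv ℝ g q (0, 1)
    - Complex.I • (f' * g q)

variable [NormedRing A] [NormedAlgebra ℂ A] [NormedSpace ℝ A]
  {e : Fin n → A} {f f' : A} {u : (Fin n → ℝ) × ℝ → ℂ} {a : (Fin n → ℝ) × ℝ → A}
  {p : (Fin n → ℝ) × ℝ}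

theorem fderiv_scalarParabolicDirac_sub_smul_apply (hu : DifferentiableAt ℝ u p)
    (hu' : DifferentiableAt ℝ (fderiv ℝ u) p) (ha : DifferentiableAt ℝ a p)
    (v : (Fin n → ℝ) × ℝ) :
    fderiv ℝ (fun q => scalarParabolicDirac e f f' u q - u q • a q) p v
      = (∑ j, fderiv ℝ (fderiv ℝ u) p v (Pi.single j 1, 0) • e j)
        + fderiv ℝ (fderiv ℝ u) p v (0, 1) • f - (Complex.I * fderiv ℝ u p v) • f'
        - (u p • fderiv ℝ a p v + fderiv ℝ u p v • a p) := by
  have hD : HasFDerivAt (fun q => scalarParabolicDirac e f f' u q - u q • a q) _ p :=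
    (((HasFDerivAt.fun_sum fun j _ =>
      (hu'.hasFDerivAt_fderiv_apply (Pi.single j 1, 0)).smul_const (e j)).fun_add
      ((hu'.hasFDerivAt_fderiv_apply (0, 1)).smul_const f)).fun_sub
      ((hu.hasFDerivAt.const_mul Complex.I).smul_const f')).fun_sub
      (hu.hasFDerivAt.fun_smul ha.hasFDerivAt)
  rw [hD.fderiv]
  simp

theorem CliffordWittRelations.parabolicDirac_add_mul_right (h : CliffordWittRelations e f f')
    (hu : ContDiffAt ℝ 2 u p) (ha : DifferentiableAt ℝ a p) :
    parabolicDirac e f f' (fun q => scalarParabolicDirac e f f' u q - u q • a q) p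
        + (scalarParabolicDirac e f f' u p - u p • a p) * a p
      = (-Complex.I * fderiv ℝ u p (0, 1)
          - ∑ j, fderiv ℝ (fun q => fderiv ℝ u q (Pi.single j 1, 0)) p (Pi.single j 1, 0))
            • (1 : A)
        - u p • ((∑ j, e j * fderiv ℝ a p (Pi.single j 1, 0)) + f * fderiv ℝ a p (0, 1)
          + a p * a p) := by
  have hu₁ : DifferentiableAt ℝ u p := hu.differentiableAt two_ne_zero
  have hu₂ : DifferentiableAt ℝ (fderiv ℝ u) p :=
    (hu.fderiv_right (m := 1) le_rfl).differentiableAt one_ne_zero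
  have hsymm : IsSymmSndFDerivAt ℝ u p := hu.isSymmSndFDerivAt (by simp)
  have hΔ : ∀ j : Fin n,
      fderiv ℝ (fun q => fderiv ℝ u q (Pi.single j 1, 0)) p (Pi.single j 1, 0)
        = fderiv ℝ (fderiv ℝ u) p (Pi.single j 1, 0) (Pi.single j 1, 0) := fun j => by
    rw [(hu₂.hasFDerivAt_fderiv_apply _).fderiv, ContinuousLinearMap.flip_apply]
  have hxt : ∀ j : Fin n, fderiv ℝ (fderiv ℝ u) p (0, 1) (Pi.single j 1, 0)
      = fderiv ℝ (fderiv ℝ u) p (Pi.single j 1, 0) (0, 1) := fun j => hsymm _ _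
  simp only [parabolicDirac, fderiv_scalarParabolicDirac_sub_smul_apply hu₁ hu₂ ha, hΔ, hxt]
  simp only [scalarParabolicDirac]
  exact h.factorization_jet_identity _ _ _ _ _ _ (fun i j => hsymm _ _) _ _ _

end ParabolicDirac

theorem parabolic_dirac_right_mult_factorization_general
    {n : ℕ} {A : Type*} [NormedRing A] [NormedAlgebra ℂ A]
    [NormedSpace ℝ A]
    (e : Fin n → A) (fW fP : A)
    (he : ∀ i j : Fin n, e i * e j + e j * e i = if i = j then (-2 : A) else 0)
    (hW : fW * fP + fP * fW = 1) (hW2 : fW * fW = 0) (hP2 : fP * fP = 0)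
    (hWe : ∀ j, fW * e j + e j * fW = 0) (hPe : ∀ j, fP * e j + e j * fP = 0)
    (a : (Fin n → ℝ) × ℝ → A) (ha : ContDiff ℝ 1 a)
    (V : (Fin n → ℝ) × ℝ → ℂ) :
    (∀ u : (Fin n → ℝ) × ℝ → ℂ, ContDiff ℝ 2 u → ∀ p : (Fin n → ℝ) × ℝ,
      (∑ i, e i * fderiv ℝ (fun q =>
            (∑ j, fderiv ℝ u q (Pi.single j 1, 0) • e j)
              + fderiv ℝ u q (0, 1) • fW - (Complex.I * u q) • fP - u q • a q)
          p (Pi.single i 1, 0))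
        + fW * fderiv ℝ (fun q =>
            (∑ j, fderiv ℝ u q (Pi.single j 1, 0) • e j)
              + fderiv ℝ u q (0, 1) • fW - (Complex.I * u q) • fP - u q • a q) p (0, 1)
        - Complex.I • (fP * ((∑ j, fderiv ℝ u p (Pi.single j 1, 0) • e j)
              + fderiv ℝ u p (0, 1) • fW - (Complex.I * u p) • fP - u p • a p))
        + ((∑ j, fderiv ℝ u p (Pi.single j 1, 0) • e j)
              + fderiv ℝ u p (0, 1) • fW - (Complex.I * u p) • fP - u p • a p) * a p
      = (-Complex.I * fderiv ℝ u p (0, 1)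
          - ∑ j, fderiv ℝ (fun q => fderiv ℝ u q (Pi.single j 1, 0)) p
              (Pi.single j 1, 0)) • (1 : A)
        - u p • ((∑ j, e j * fderiv ℝ a p (Pi.single j 1, 0))
              + fW * fderiv ℝ a p (0, 1) + a p * a p)) ∧
    ((∀ p : (Fin n → ℝ) × ℝ,
        (∑ j, e j * fderiv ℝ a p (Pi.single j 1, 0))
            + fW * fderiv ℝ a p (0, 1) + a p * a p = algebraMap ℂ A (V p)) →
      ∀ u : (Fin n → ℝ) × ℝ → ℂ, ContDiff ℝ 2 u → ∀ p : (Fin n → ℝ) × ℝ,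
      (∑ i, e i * fderiv ℝ (fun q =>
            (∑ j, fderiv ℝ u q (Pi.single j 1, 0) • e j)
              + fderiv ℝ u q (0, 1) • fW - (Complex.I * u q) • fP - u q • a q)
          p (Pi.single i 1, 0))
        + fW * fderiv ℝ (fun q =>
            (∑ j, fderiv ℝ u q (Pi.single j 1, 0) • e j)
              + fderiv ℝ u q (0, 1) • fW - (Complex.I * u q) • fP - u q • a q) p (0, 1)
        - Complex.I • (fP * ((∑ j, fderiv ℝ u p (Pi.single j 1, 0) • e j)
              + fderiv ℝ u p (0, 1) • fW - (Complex.I * u p) • fP - u p • a p))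
        + ((∑ j, fderiv ℝ u p (Pi.single j 1, 0) • e j)
              + fderiv ℝ u p (0, 1) • fW - (Complex.I * u p) • fP - u p • a p) * a p
      = (-Complex.I * fderiv ℝ u p (0, 1)
          - ∑ j, fderiv ℝ (fun q => fderiv ℝ u q (Pi.single j 1, 0)) p
              (Pi.single j 1, 0) - V p * u p) • (1 : A)) := by
  have h : CliffordWittRelations e fW fP := ⟨he, hW, hW2, hP2, hWe, hPe⟩
  have ha' : Differentiable ℝ a := ha.differentiable one_ne_zero
  refine ⟨fun u hu p => h.parabolicDirac_add_mul_right hu.contDiffAt (ha' p), fun hV u hu p => ?_⟩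
  refine (h.parabolicDirac_add_mul_right hu.contDiffAt (ha' p)).trans ?_
  rw [hV p, Algebra.algebraMap_eq_smul_one, smul_smul, mul_comm (u p), ← sub_smul]

/-- In the complexified Clifford–Witt algebra, with
`D⁻ = Σⱼeⱼ∂ⱼ + 𝔣∂ₜ - i𝔣⁺` and `M^a` right multiplication, for scalar-valued `u`:
`(D⁻ + M^a)(D⁻ - M^a)u = (-i∂ₜ - Δ)u - u(D_x a + 𝔣∂ₜa + a²)`; hence this factorizes
the non-stationary Schrödinger operator `-i∂ₜ - Δ - V` iff `D_x a + 𝔣∂ₜa + a² = V`. -/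
theorem parabolic_dirac_right_mult_factorization
    {n : ℕ} {A : Type*} [NormedRing A] [NormedAlgebra ℂ A]
    [NormedSpace ℝ A] [IsScalarTower ℝ ℂ A]
    (e : Fin n → A) (fW fP : A)
    (he : ∀ i j : Fin n, e i * e j + e j * e i = if i = j then (-2 : A) else 0)
    (hW : fW * fP + fP * fW = 1) (hW2 : fW * fW = 0) (hP2 : fP * fP = 0)
    (hWe : ∀ j, fW * e j + e j * fW = 0) (hPe : ∀ j, fP * e j + e j * fP = 0)
    (a : (Fin n → ℝ) × ℝ → A) (ha : ContDiff ℝ 1 a)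
    (V : (Fin n → ℝ) × ℝ → ℂ) :
    (∀ u : (Fin n → ℝ) × ℝ → ℂ, ContDiff ℝ 2 u → ∀ p : (Fin n → ℝ) × ℝ,
      (∑ i, e i * fderiv ℝ (fun q =>
            (∑ j, fderiv ℝ u q (Pi.single j 1, 0) • e j)
              + fderiv ℝ u q (0, 1) • fW - (Complex.I * u q) • fP - u q • a q)
          p (Pi.single i 1, 0))
        + fW * fderiv ℝ (fun q =>
            (∑ j, fderiv ℝ u q (Pi.single j 1, 0) • e j)
              + fderiv ℝ u q (0, 1) • fW - (Complex.I * u q) • fP - u q • a q) p (0, 1)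
        - Complex.I • (fP * ((∑ j, fderiv ℝ u p (Pi.single j 1, 0) • e j)
              + fderiv ℝ u p (0, 1) • fW - (Complex.I * u p) • fP - u p • a p))
        + ((∑ j, fderiv ℝ u p (Pi.single j 1, 0) • e j)
              + fderiv ℝ u p (0, 1) • fW - (Complex.I * u p) • fP - u p • a p) * a p
      = (-Complex.I * fderiv ℝ u p (0, 1)
          - ∑ j, fderiv ℝ (fun q => fderiv ℝ u q (Pi.single j 1, 0)) p
              (Pi.single j 1, 0)) • (1 : A)
        - u p • ((∑ j, e j * fderiv ℝ a p (Pi.single j 1, 0))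
              + fW * fderiv ℝ a p (0, 1) + a p * a p)) ∧
    ((∀ p : (Fin n → ℝ) × ℝ,
        (∑ j, e j * fderiv ℝ a p (Pi.single j 1, 0))
            + fW * fderiv ℝ a p (0, 1) + a p * a p = algebraMap ℂ A (V p)) →
      ∀ u : (Fin n → ℝ) × ℝ → ℂ, ContDiff ℝ 2 u → ∀ p : (Fin n → ℝ) × ℝ,
      (∑ i, e i * fderiv ℝ (fun q =>
            (∑ j, fderiv ℝ u q (Pi.single j 1, 0) • e j)
              + fderiv ℝ u q (0, 1) • fW - (Complex.I * u q) • fP - u q • a q)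
          p (Pi.single i 1, 0))
        + fW * fderiv ℝ (fun q =>
            (∑ j, fderiv ℝ u q (Pi.single j 1, 0) • e j)
              + fderiv ℝ u q (0, 1) • fW - (Complex.I * u q) • fP - u q • a q) p (0, 1)
        - Complex.I • (fP * ((∑ j, fderiv ℝ u p (Pi.single j 1, 0) • e j)
              + fderiv ℝ u p (0, 1) • fW - (Complex.I * u p) • fP - u p • a p))
        + ((∑ j, fderiv ℝ u p (Pi.single j 1, 0) • e j)
              + fderiv ℝ u p (0, 1) • fW - (Complex.I * u p) • fP - u p • a p) * a p
      = (-Complex.I * fderiv ℝ u p (0, 1)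
          - ∑ j, fderiv ℝ (fun q => fderiv ℝ u q (Pi.single j 1, 0)) p
              (Pi.single j 1, 0) - V p * u p) • (1 : A)) :=
  parabolic_dirac_right_mult_factorization_general e fW fP he hW hW2 hP2 hWe hPe a ha V
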